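/- arXiv:2601.09737 — 6 statements merged into one kernel-verified Lean document; each statement's English description precedes it below -/
import Mathlib

section
/- Let H_{N-1} = Σ_{j=1}^{N-1} 1/(N-j) denote the (N-1)-th harmonic number. Then the limit as r → +∞ of the expression ρ(r) = ((r^{N-1}+⋯+r+1)/(r^{N-2}+⋯+r+1)) · ((N-1)/(r+N-1)) · Σ_{j=1}^{N-1} ((rj+N-j)/(rj(N-j))) · ((r^N - r^j)/(r^N - 1)) equals (N-1)·H_{N-1}. -/
/-!
Dividing numerators and denominators by the appropriate powers of `r` turns every factor of the
rate into a rational function of `t = r⁻¹` whose denominator does not vanish at `t = 0`; the limit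
`r → ∞` is then the value of that function at `t = 0`, where the `j`-th summand is `1 / (N - j)`
and the prefactor is `N - 1`.
-/

open Finset Filter Topology

lemma geom_sum_eq_pow_mul_geom_sum_inv {K : Type*} [DivisionSemiring K] {x : K} (hx : x ≠ 0)
    (n : ℕ) : ∑ k ∈ range n, x ^ k = x ^ (n - 1) * ∑ k ∈ range n, x⁻¹ ^ k := by
  rw [mul_sum, ← sum_range_reflect]
  refine sum_congr rfl fun k hk => ?_
  rw [inv_pow, ← pow_sub₀ x hx (by grind)]

section

variable {N : ℕ}

lemma prefactor_eq_inv (hN : 2 ≤ N) {r : ℝ} (hr : 0 < r) :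
    (∑ k ∈ range N, r ^ k) / (∑ k ∈ range (N - 1), r ^ k) * ((N - 1 : ℝ) / (r + N - 1)) =
      (∑ k ∈ range N, r⁻¹ ^ k) / (∑ k ∈ range (N - 1), r⁻¹ ^ k) *
        ((N - 1 : ℝ) / (1 + (N - 1) * r⁻¹)) := by
  have hS : 0 < ∑ k ∈ range (N - 1), r⁻¹ ^ k :=
    sum_pos (fun k _ => by positivity) (nonempty_range_iff.mpr (by omega))
  have hpow : r ^ (N - 1) = r ^ (N - 1 - 1) * r := by rw [← pow_succ]; congr 1; omega
  rw [geom_sum_eq_pow_mul_geom_sum_inv hr.ne', geom_sum_eq_pow_mul_geom_sum_inv hr.ne', hpow]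
  field_simp
  ring

lemma summand_eq_inv {j : ℕ} (hj : j ≤ N) {r : ℝ} (hr : r ≠ 0) :
    (r * j + N - j) / (r * j * (N - j)) * ((r ^ N - r ^ j) / (r ^ N - 1)) =
      (j + (N - j) * r⁻¹) / (j * (N - j)) * ((1 - r⁻¹ ^ (N - j)) / (1 - r⁻¹ ^ N)) := by
  have hpow : r ^ N = r ^ (N - j) * r ^ j := by rw [← pow_add]; congr 1; omega
  congr 1
  · rw [← mul_div_mul_left _ _ hr]
    field_simp
    ring
  · rw [inv_pow, inv_pow, hpow]
    field_simp

lemma tendsto_prefactor_nhds_zero (hN : 2 ≤ N) :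
    Tendsto (fun t : ℝ => (∑ k ∈ range N, t ^ k) / (∑ k ∈ range (N - 1), t ^ k) *
      ((N - 1 : ℝ) / (1 + (N - 1) * t))) (𝓝 0) (𝓝 (N - 1)) := by
  have hN0 : N - 1 ≠ 0 := by omega
  have hcont : ContinuousAt (fun t : ℝ => (∑ k ∈ range N, t ^ k) / (∑ k ∈ range (N - 1), t ^ k) *
      ((N - 1 : ℝ) / (1 + (N - 1) * t))) 0 := by
    fun_prop (disch := norm_num [zero_geom_sum, hN0])
  simpa [zero_geom_sum, show N ≠ 0 by omega, hN0] using hcont.tendsto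

lemma tendsto_summand_nhds_zero {j : ℕ} (hj0 : j ≠ 0) (hjN : j < N) :
    Tendsto (fun t : ℝ => (j + (N - j) * t) / (j * (N - j)) * ((1 - t ^ (N - j)) / (1 - t ^ N)))
      (𝓝 0) (𝓝 (1 / (N - j))) := by
  have hNj : (N - j : ℝ) ≠ 0 := sub_ne_zero.mpr (by exact_mod_cast hjN.ne')
  have hN0 : N ≠ 0 := by omega
  have hcont : ContinuousAt (fun t : ℝ => (j + (N - j) * t) / (j * (N - j)) *
      ((1 - t ^ (N - j)) / (1 - t ^ N))) 0 := by
    fun_prop (disch := norm_num [hj0, hNj, hN0])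
  convert hcont.tendsto using 2
  simp only [mul_zero, add_zero, ne_eq, show N - j ≠ 0 by omega, hN0, not_false_eq_true,
    zero_pow, sub_zero]
  field_simp

end

/-- The critical absorption-time rate for Bernoulli proliferation on the
complete graph `K_N` tends to `(N-1) H_{N-1}` as `r → +∞`. -/
theorem critical_absorption_rate_limit_complete (N : ℕ) (hN : 2 ≤ N) :
    Tendsto
      (fun r : ℝ =>
        ((∑ k ∈ range N, r ^ k) / (∑ k ∈ range (N - 1), r ^ k)) *
          ((N - 1 : ℝ) / (r + N - 1)) *
          ∑ j ∈ Icc 1 (N - 1),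
            ((r * j + N - j) / (r * j * (N - j))) *
              ((r ^ N - r ^ j) / (r ^ N - 1)))
      atTop
      (nhds ((N - 1 : ℝ) * ∑ j ∈ Icc 1 (N - 1), 1 / (N - j : ℝ))) := by
  have hlim := (tendsto_prefactor_nhds_zero hN).mul <| tendsto_finsetSum (Icc 1 (N - 1))
    fun j hj => tendsto_summand_nhds_zero (N := N) (j := j) (by grind) (by grind)
  refine (hlim.comp tendsto_inv_atTop_zero).congr' ?_
  filter_upwards [eventually_gt_atTop 0] with r hr
  rw [Function.comp_apply, prefactor_eq_inv hN hr]
  congr 1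
  exact sum_congr rfl fun j hj => (summand_eq_inv (by grind) hr.ne').symm
end

section
/- For the Moran process on K_N at neutral drift r = 1 and critical parameter, the critical fixation time rate equals N - 1: that is, lim_{r→1} P(r,p_c) = N-1, where P(r,p_c) = ((r^{N-1}+⋯+1)/(r^{N-2}+⋯+1))·((N-1)/(r+N-1))·Σ_{j=1}^{N-1} ((r^N(r^j-1))/(r^j(r^N-1)))·((rj+N-j)/(rj(N-j)))·((r^N - r^j)/(r^N - r^{N-1})). -/
/-!
Away from `r = 1`, every quotient `(r ^ a - 1) / (r ^ b - 1)` equals the ratio of geometric sums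
`(∑ k < a, r ^ k) / (∑ k < b, r ^ k)`, which is continuous at `1` with value `a / b`; the remaining
factors are continuous at `1`. Hence the `j`-th summand tends to
`(j / N) * (N / (j * (N - j))) * (N - j) = 1`, and the prefactor to `(N / (N - 1)) * ((N - 1) / N) = 1`.
-/

open Finset Filter Topology

variable {𝕜 : Type*}

lemma pow_sub_one_div_pow_sub_one_eq_geom_sum_div [Field 𝕜] {r : 𝕜} (hr : r ≠ 1) (m n : ℕ) :
    (r ^ m - 1) / (r ^ n - 1) = (∑ k ∈ range m, r ^ k) / ∑ k ∈ range n, r ^ k := by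
  rw [geom_sum_eq hr, geom_sum_eq hr, div_div_div_cancel_right₀ (sub_ne_zero.mpr hr)]

lemma tendsto_pow_sub_one_div_pow_sub_one [NormedField 𝕜] [CharZero 𝕜] (m : ℕ) {n : ℕ}
    (hn : n ≠ 0) :
    Tendsto (fun r : 𝕜 => (r ^ m - 1) / (r ^ n - 1)) (𝓝[≠] 1) (𝓝 ((m : 𝕜) / n)) := by
  have hcont : ContinuousAt (fun r : 𝕜 => (∑ k ∈ range m, r ^ k) / ∑ k ∈ range n, r ^ k) 1 := by
    fun_prop (disch := simp [hn])
  have := hcont.continuousWithinAt (s := {1}ᶜ)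
  simp only [ContinuousWithinAt, one_pow, sum_const, card_range, nsmul_eq_mul, mul_one] at this
  exact this.congr' (eventually_nhdsWithin_of_forall fun r hr =>
    (pow_sub_one_div_pow_sub_one_eq_geom_sum_div hr m n).symm)

lemma pow_sub_pow_div_pow_sub_pow_pred [Field 𝕜] (r : 𝕜) {j N : ℕ} (hj : j ≤ N) (hN : 1 ≤ N) :
    (r ^ N - r ^ j) / (r ^ N - r ^ (N - 1)) =
      r ^ j / r ^ (N - 1) * ((r ^ (N - j) - 1) / (r ^ 1 - 1)) := by
  have hj' : r ^ N - r ^ j = r ^ j * (r ^ (N - j) - 1) := by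
    rw [mul_sub, ← pow_add, Nat.add_sub_cancel' hj, mul_one]
  have hN' : r ^ N - r ^ (N - 1) = r ^ (N - 1) * (r ^ 1 - 1) := by
    rw [mul_sub, ← pow_add, Nat.sub_add_cancel hN, mul_one]
  rw [hj', hN', mul_div_mul_comm]

lemma tendsto_pow_sub_pow_div_pow_sub_pow_pred [NormedField 𝕜] [CharZero 𝕜] {j N : ℕ}
    (hj : j ≤ N) (hN : 1 ≤ N) :
    Tendsto (fun r : 𝕜 => (r ^ N - r ^ j) / (r ^ N - r ^ (N - 1))) (𝓝[≠] 1)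
      (𝓝 ((N - j : ℕ) : 𝕜)) := by
  have hpow : Tendsto (fun r : 𝕜 => r ^ j / r ^ (N - 1)) (𝓝[≠] 1) (𝓝 1) := by
    have : ContinuousAt (fun r : 𝕜 => r ^ j / r ^ (N - 1)) 1 := by fun_prop (disch := simp)
    simpa using (this.continuousWithinAt (s := {1}ᶜ)).tendsto
  simp only [pow_sub_pow_div_pow_sub_pow_pred _ hj hN]
  simpa using hpow.mul (tendsto_pow_sub_one_div_pow_sub_one (𝕜 := 𝕜) (N - j) one_ne_zero)

lemma tendsto_fixation_summand {j N : ℕ} (hj : 1 ≤ j) (hjN : j < N) :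
    Tendsto (fun r : ℝ => (r ^ N * (r ^ j - 1) / (r ^ j * (r ^ N - 1))) *
        ((r * j + N - j) / (r * j * (N - j))) * ((r ^ N - r ^ j) / (r ^ N - r ^ (N - 1))))
      (𝓝[≠] 1) (𝓝 1) := by
  have hNj : (N : ℝ) - j ≠ 0 := sub_ne_zero.mpr (by exact_mod_cast hjN.ne')
  have hj0 : (j : ℝ) ≠ 0 := by exact_mod_cast (by omega : j ≠ 0)
  have hN0 : (N : ℝ) ≠ 0 := by exact_mod_cast (by omega : N ≠ 0)
  have hfirst : Tendsto (fun r : ℝ => r ^ N * (r ^ j - 1) / (r ^ j * (r ^ N - 1))) (𝓝[≠] 1)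
      (𝓝 ((j : ℝ) / N)) := by
    have hpow : ContinuousAt (fun r : ℝ => r ^ N / r ^ j) 1 := by fun_prop (disch := simp)
    simp only [mul_div_mul_comm]
    simpa using (hpow.continuousWithinAt (s := {1}ᶜ)).tendsto.mul
      (tendsto_pow_sub_one_div_pow_sub_one j (by omega : N ≠ 0))
  have hmiddle : ContinuousAt (fun r : ℝ => (r * j + N - j) / (r * j * (N - j))) 1 := by
    fun_prop (disch := simp [hj0, hNj])
  have := (hfirst.mul (hmiddle.continuousWithinAt (s := {1}ᶜ)).tendsto).mul
    (tendsto_pow_sub_pow_div_pow_sub_pow_pred (𝕜 := ℝ) hjN.le (by omega))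
  convert this using 2
  rw [Nat.cast_sub hjN.le]
  field_simp
  ring

lemma tendsto_fixation_prefactor {N : ℕ} (hN : 2 ≤ N) :
    Tendsto (fun r : ℝ => ((∑ k ∈ range N, r ^ k) / (∑ k ∈ range (N - 1), r ^ k)) *
        ((N - 1 : ℝ) / (r + N - 1))) (𝓝[≠] 1) (𝓝 1) := by
  have hN1 : ((N - 1 : ℕ) : ℝ) = N - 1 := by rw [Nat.cast_sub (by omega), Nat.cast_one]
  have hN1' : (N : ℝ) - 1 ≠ 0 := by rw [← hN1]; exact_mod_cast (by omega : N - 1 ≠ 0)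
  have hN0 : (N : ℝ) ≠ 0 := by exact_mod_cast (by omega : N ≠ 0)
  have hcont : ContinuousAt (fun r : ℝ => ((∑ k ∈ range N, r ^ k) / (∑ k ∈ range (N - 1), r ^ k)) *
      ((N - 1 : ℝ) / (r + N - 1))) 1 := by
    fun_prop (disch := simp [hN0, hN1, hN1'])
  convert (hcont.continuousWithinAt (s := {1}ᶜ)).tendsto using 2
  simp only [one_pow, sum_const, card_range, nsmul_eq_mul, mul_one, hN1, add_sub_cancel_left]
  field_simp

/-- As `r → 1`, the critical fixation time rate for Bernoulli proliferation
on the complete graph `K_N` tends to `N - 1`. -/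
theorem critical_fixation_rate_at_one_complete (N : ℕ) (hN : 2 ≤ N) :
    Tendsto
      (fun r : ℝ =>
        ((∑ k ∈ range N, r ^ k) / (∑ k ∈ range (N - 1), r ^ k)) *
          ((N - 1 : ℝ) / (r + N - 1)) *
          ∑ j ∈ Icc 1 (N - 1),
            (r ^ N * (r ^ j - 1) / (r ^ j * (r ^ N - 1))) *
              ((r * j + N - j) / (r * j * (N - j))) *
              ((r ^ N - r ^ j) / (r ^ N - r ^ (N - 1))))
      (nhdsWithin 1 {(1 : ℝ)}ᶜ)
      (nhds ((N : ℝ) - 1)) := by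
  have hsum := tendsto_finsetSum (Icc 1 (N - 1)) fun j hj =>
    tendsto_fixation_summand (N := N) (mem_Icc.mp hj).1 (by have := (mem_Icc.mp hj).2; omega)
  convert (tendsto_fixation_prefactor hN).mul hsum using 2
  rw [sum_const, Nat.card_Icc, one_mul, nsmul_one, Nat.add_sub_cancel, Nat.cast_sub (by omega),
    Nat.cast_one]
end

section
/- The limit as r → +∞ of the critical fixation time rate for Bernoulli proliferation on K_N equals (N-1)·H_{N-1}: lim_{r→∞} ((r^{N-1}+⋯+1)/(r^{N-2}+⋯+1))·((N-1)/(r+N-1))·Σ_{j=1}^{N-1} ((r^N(r^j-1))/(r^j(r^N-1)))·((rj+N-j)/(rj(N-j)))·((r^N - r^j)/(r^N - r^{N-1})) = (N-1)·Σ_{k=1}^{N-1} 1/k. -/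
/-!
Each geometric sum, power difference `r ^ a - r ^ b` (`b < a`) and affine factor `r * a + c` is
asymptotically equivalent to its leading monomial as `r → ∞`. Replacing every factor by its
leading monomial turns the prefactor into the constant `N - 1` and the `j`-th term into
`1 / (N - j)`; the reflection `j ↦ N - j` turns the limit of the sum into `H_{N-1}`.
-/

open Finset Filter Asymptotics Topology

section LeadingMonomial

variable {𝕜 : Type*} [NormedField 𝕜] [LinearOrder 𝕜] [IsStrictOrderedRing 𝕜]
  [OrderTopology 𝕜]

lemma isEquivalent_pow_sub_pow_atTop {a b : ℕ} (h : b < a) :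
    (fun r : 𝕜 => r ^ a - r ^ b) ~[atTop] fun r => r ^ a :=
  IsEquivalent.refl.sub_isLittleO (isLittleO_pow_pow_atTop_of_lt h)

lemma isEquivalent_pow_sub_one_atTop {a : ℕ} (h : a ≠ 0) :
    (fun r : 𝕜 => r ^ a - 1) ~[atTop] fun r => r ^ a := by
  simpa using isEquivalent_pow_sub_pow_atTop (𝕜 := 𝕜) (Nat.pos_of_ne_zero h)

lemma isEquivalent_geom_sum_atTop (n : ℕ) :
    (fun r : 𝕜 => ∑ k ∈ range (n + 1), r ^ k) ~[atTop] fun r => r ^ n := by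
  simp only [sum_range_succ]
  exact (IsLittleO.fun_sum fun k hk => isLittleO_pow_pow_atTop_of_lt (mem_range.1 hk))
    |>.add_isEquivalent IsEquivalent.refl

end LeadingMonomial

lemma isEquivalent_mul_add_const_atTop {a : ℝ} (ha : 0 < a) (c : ℝ) :
    (fun r : ℝ => r * a + c) ~[atTop] fun r => r * a :=
  IsEquivalent.refl.add_const_of_norm_tendsto_atTop
    (tendsto_norm_atTop_atTop.comp (tendsto_id.atTop_mul_const ha))

lemma tendsto_critical_rate_prefactor (N : ℕ) (hN : 2 ≤ N) :
    Tendsto (fun r : ℝ => ((∑ k ∈ range N, r ^ k) / (∑ k ∈ range (N - 1), r ^ k)) *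
      ((N - 1 : ℝ) / (r + N - 1))) atTop (𝓝 (N - 1)) := by
  obtain ⟨n, rfl⟩ : ∃ n, N = n + 1 + 1 := ⟨N - 2, by omega⟩
  have hlin : (fun r : ℝ => r + ↑(n + 1 + 1) - 1) ~[atTop] fun r => r * 1 :=
    (isEquivalent_mul_add_const_atTop one_pos (n + 1)).congr_left
      (.of_eq (by ext r; push_cast; ring))
  have h := ((isEquivalent_geom_sum_atTop (n + 1)).div (isEquivalent_geom_sum_atTop n)).mul
    ((IsEquivalent.refl (u := fun _ => ((n + 1 + 1 : ℕ) - 1 : ℝ))).div hlin)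
  refine h.symm.tendsto_nhds (tendsto_const_nhds.congr' ?_)
  filter_upwards [eventually_ne_atTop 0] with r hr
  simp only [Pi.mul_apply, Pi.div_apply]
  field_simp
  ring

lemma tendsto_critical_rate_term (N j : ℕ) (hj : 0 < j) (hjN : j < N) :
    Tendsto (fun r : ℝ => (r ^ N * (r ^ j - 1) / (r ^ j * (r ^ N - 1))) *
      ((r * j + N - j) / (r * j * (N - j))) * ((r ^ N - r ^ j) / (r ^ N - r ^ (N - 1))))
      atTop (𝓝 (1 / (N - j))) := by
  have hNj : (N - j : ℝ) ≠ 0 := sub_ne_zero.2 (by exact_mod_cast hjN.ne')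
  have hfirst : (fun r : ℝ => r ^ N * (r ^ j - 1) / (r ^ j * (r ^ N - 1))) ~[atTop]
      fun r => r ^ N * r ^ j / (r ^ j * r ^ N) :=
    (IsEquivalent.refl.mul (isEquivalent_pow_sub_one_atTop hj.ne')).div
      (IsEquivalent.refl.mul (isEquivalent_pow_sub_one_atTop (by omega)))
  have hmiddle : (fun r : ℝ => (r * j + N - j) / (r * j * (N - j))) ~[atTop]
      fun r => r * j / (r * j * (N - j)) :=
    ((isEquivalent_mul_add_const_atTop (by exact_mod_cast hj) (N - j)).congr_left
      (.of_eq (by ext r; ring))).div IsEquivalent.refl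
  have hlast : (fun r : ℝ => (r ^ N - r ^ j) / (r ^ N - r ^ (N - 1))) ~[atTop]
      fun r => r ^ N / r ^ N :=
    (isEquivalent_pow_sub_pow_atTop hjN).div (isEquivalent_pow_sub_pow_atTop (by omega))
  refine ((hfirst.mul hmiddle).mul hlast).symm.tendsto_nhds (tendsto_const_nhds.congr' ?_)
  filter_upwards [eventually_ne_atTop 0] with r hr
  simp only [Pi.mul_apply]
  field_simp

lemma sum_Icc_one_div_sub_eq_sum_Icc_one_div (N : ℕ) :
    ∑ j ∈ Icc 1 (N - 1), 1 / ((N : ℝ) - j) = ∑ k ∈ Icc 1 (N - 1), 1 / (k : ℝ) := by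
  refine sum_nbij' (N - ·) (N - ·) ?_ ?_ ?_ ?_ ?_ <;> intro j hj <;> simp only [mem_Icc] at hj ⊢
  all_goals first | omega | rw [Nat.cast_sub (by omega)]

/-- As `r → +∞`, the critical fixation time rate for Bernoulli proliferation
on the complete graph `K_N` tends to `(N-1) H_{N-1}`. -/
theorem critical_fixation_rate_limit_complete (N : ℕ) (hN : 2 ≤ N) :
    Tendsto
      (fun r : ℝ =>
        ((∑ k ∈ range N, r ^ k) / (∑ k ∈ range (N - 1), r ^ k)) *
          ((N - 1 : ℝ) / (r + N - 1)) *
          ∑ j ∈ Icc 1 (N - 1),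
            (r ^ N * (r ^ j - 1) / (r ^ j * (r ^ N - 1))) *
              ((r * j + N - j) / (r * j * (N - j))) *
              ((r ^ N - r ^ j) / (r ^ N - r ^ (N - 1))))
      atTop
      (nhds ((N - 1 : ℝ) * ∑ k ∈ Icc 1 (N - 1), 1 / (k : ℝ))) := by
  rw [← sum_Icc_one_div_sub_eq_sum_Icc_one_div N]
  refine (tendsto_critical_rate_prefactor N hN).mul (tendsto_finsetSum _ fun j hj => ?_)
  rw [mem_Icc] at hj
  exact tendsto_critical_rate_term N j hj.1 (by omega)
end

section
/- For the cycle graph of order N at r = 1 and p_c = 1/2, the critical fixation time rate equals N(N+1)/((N-2)(N+3)). -/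
/-!
At `r = 1` one has `w_j Φ_j = j` and `w_j Φ_j / Φ_1 = N j`, the boundary correction
`2 w_1 - w_2 Φ_2 / Φ_1` vanishes and the cycle denominator equals `N`. Hence both fixation times are
nested Gauss sums: `T_1^M = ∑_{1 ≤ j ≤ i ≤ N-1} j = (N-1) N (N+1) / 6` and
`T_1 = ∑_{2 ≤ j ≤ i ≤ N-1} j = (N-1)(N-2)(N+3) / 6`.
-/

open Finset

section NestedGaussSums

variable {K : Type*} [Field K] [CharZero K]

theorem sum_Icc_one_natCast (n : ℕ) : ∑ j ∈ Icc 1 n, (j : K) = n * (n + 1) / 2 := by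
  induction n with
  | zero => simp
  | succ n ih =>
    rw [sum_Icc_succ_top (by omega), ih]
    push_cast
    ring

theorem sum_Icc_two_natCast {n : ℕ} (hn : 1 ≤ n) :
    ∑ j ∈ Icc 2 n, (j : K) = n * (n + 1) / 2 - 1 := by
  rw [← sum_Icc_one_natCast, ← sum_Ioc_add_eq_sum_Icc hn, ← Icc_add_one_left_eq_Ioc]
  norm_num

theorem sum_Icc_one_sum_Icc_one_natCast (n : ℕ) :
    ∑ i ∈ Icc 1 n, ∑ j ∈ Icc 1 i, (j : K) = n * (n + 1) * (n + 2) / 6 := by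
  induction n with
  | zero => simp
  | succ n ih =>
    rw [sum_Icc_succ_top (by omega), ih, sum_Icc_one_natCast]
    push_cast
    ring

theorem sum_Icc_two_sum_Icc_two_natCast (n : ℕ) :
    ∑ i ∈ Icc 2 n, ∑ j ∈ Icc 2 i, (j : K) = n * (n - 1) * (n + 4) / 6 := by
  rcases Nat.eq_zero_or_pos n with rfl | hn
  · simp
  induction n, hn using Nat.le_induction with
  | base => simp
  | succ n hn ih =>
    rw [sum_Icc_succ_top (by omega), ih, sum_Icc_two_natCast (by omega)]
    push_cast
    ring

end NestedGaussSums

/-- Critical fixation time rate on the cycle at `r = 1`, `p_c = 1/2` equals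
`N(N+1)/((N-2)(N+3))`, where `w_j = N` and `Φ_j = j/N`. -/
theorem cycle_critical_fixation_rate_neutral (N : ℕ) (hN : 3 ≤ N) :
    (∑ i ∈ Icc 1 (N - 1), ∑ j ∈ Icc 1 i, (N : ℝ) * ((j : ℝ) / N)) /
        (((∑ i ∈ Icc 2 (N - 1), ∑ j ∈ Icc 2 i, (N : ℝ) * (((j : ℝ) / N) / ((1 : ℝ) / N))) +
            (2 * (N : ℝ) - (N : ℝ) * (((2 : ℝ) / N) / ((1 : ℝ) / N))) * ((N : ℝ) - 1) /
              (1 + 2 * (1 / 2))) /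
          (1 + (2 / (1 + 1)) * ((N : ℝ) - 1))) =
      (N : ℝ) * ((N : ℝ) + 1) / (((N : ℝ) - 2) * ((N : ℝ) + 3)) := by
  have hN₀ : (N : ℝ) ≠ 0 := by positivity
  have hN₁ : (N : ℝ) - 1 ≠ 0 := by
    rw [sub_ne_zero]; exact_mod_cast (by omega : N ≠ 1)
  have hN₂ : (N : ℝ) - 2 ≠ 0 := by
    rw [sub_ne_zero]; exact_mod_cast (by omega : N ≠ 2)
  have hcast : ((N - 1 : ℕ) : ℝ) = N - 1 := by rw [Nat.cast_sub (by omega), Nat.cast_one]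
  have moran : ∑ i ∈ Icc 1 (N - 1), ∑ j ∈ Icc 1 i, (N : ℝ) * ((j : ℝ) / N) =
      (N - 1) * N * (N + 1) / 6 := by
    simp_rw [mul_div_cancel₀ _ hN₀]
    rw [sum_Icc_one_sum_Icc_one_natCast, hcast]
    ring
  have proliferation :
      ∑ i ∈ Icc 2 (N - 1), ∑ j ∈ Icc 2 i, (N : ℝ) * (((j : ℝ) / N) / ((1 : ℝ) / N)) =
        N * ((N - 1) * (N - 2) * (N + 3) / 6) := by
    simp_rw [div_div_div_cancel_right₀ hN₀, div_one, ← mul_sum]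
    rw [sum_Icc_two_sum_Icc_two_natCast, hcast]
    ring
  have boundary : 2 * (N : ℝ) - N * (((2 : ℝ) / N) / ((1 : ℝ) / N)) = 0 := by
    rw [div_div_div_cancel_right₀ hN₀, div_one]
    ring
  rw [moran, proliferation, boundary]
  field_simp
  ring
end

section
/- For the cycle graph of order N, the limit as r → +∞ of the critical absorption time rate equals 2N(N-1)/((N+1)(N-2)): specifically, lim_{r→∞} [Σ_{i=1}^{N-1} Σ_{j=1}^i (1/r)^{i-j+1}(rj+N-j)] / [Σ_{i=2}^{N-1} Σ_{j=2}^i (1/(2r p_c))^{i-j+1}(rj+N-j) + (N/2)Σ_{i=1}^{N-1}(1/r)^i] = 2N(N-1)/((N+1)(N-2)), where p_c = p_c(r) satisfies (2/(1+2rp_c))Σ_{i=0}^{N-2}(1/(2rp_c))^i = Σ_{i=1}^{N-1}(1/r)^i and p_c(r) → 1 as r → ∞. -/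
/-!
Both sums are polynomials in `x = 1/r` (resp. `x = 1/(2 r p_c)`) whose coefficients grow
linearly in `r`. Since `r x → 1` (resp. `1/2`, using `p_c → 1`), a term
`x^(i-j+1) (r j + N - j)` tends to `j` (resp. `j/2`) on the diagonal `j = i` and to `0` off it,
while the tail `(N/2) Σ (1/r)^i` vanishes. So the numerator tends to `Σ_{i=1}^{N-1} i = N(N-1)/2`
and the denominator to `(N(N-1)/2 - 1)/2`.
-/

open Finset Filter Topology

section Asymptotics

variable {x : ℝ → ℝ} {L : ℝ}

lemma tendsto_zero_of_tendsto_mul_self (hx : Tendsto (fun r => r * x r) atTop (𝓝 L)) :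
    Tendsto x atTop (𝓝 0) := by
  have h := hx.mul tendsto_inv_atTop_zero
  rw [mul_zero] at h
  refine h.congr' ?_
  filter_upwards [eventually_ne_atTop 0] with r hr
  field_simp

lemma tendsto_pow_succ_mul_linear (hx : Tendsto (fun r => r * x r) atTop (𝓝 L))
    (k : ℕ) (a b : ℝ) :
    Tendsto (fun r => x r ^ (k + 1) * (r * a + b)) atTop (𝓝 (if k = 0 then L * a else 0)) := by
  have h := ((tendsto_zero_of_tendsto_mul_self hx).pow k).mul
    ((hx.mul_const a).add ((tendsto_zero_of_tendsto_mul_self hx).mul_const b))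
  have hlim : (0 : ℝ) ^ k * (L * a + 0 * b) = if k = 0 then L * a else 0 := by
    cases k <;> simp
  rw [hlim] at h
  exact h.congr fun r => by ring

lemma tendsto_triangular_sum (hx : Tendsto (fun r => r * x r) atTop (𝓝 L)) (m n : ℕ) (c : ℝ) :
    Tendsto (fun r => ∑ i ∈ Icc m n, ∑ j ∈ Icc m i, x r ^ (i - j + 1) * (r * j + c - j))
      atTop (𝓝 (L * ∑ i ∈ Icc m n, (i : ℝ))) := by
  rw [mul_sum]
  refine tendsto_finsetSum _ fun i hi => ?_
  have hdiag : L * i = ∑ j ∈ Icc m i, if j = i then L * j else 0 := by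
    rw [sum_ite_eq']
    simp [(mem_Icc.mp hi).1]
  rw [hdiag]
  refine tendsto_finsetSum _ fun j hj => ?_
  have h := tendsto_pow_succ_mul_linear hx (i - j) j (c - j)
  have hij : i - j = 0 ↔ j = i := by have := (mem_Icc.mp hj).2; omega
  simp only [hij] at h
  exact h.congr fun r => by ring

end Asymptotics

lemma tendsto_mul_one_div_self : Tendsto (fun r : ℝ => r * (1 / r)) atTop (𝓝 1) :=
  tendsto_const_nhds.congr' <| by
    filter_upwards [eventually_ne_atTop 0] with r hr
    field_simp

lemma tendsto_mul_one_div_two_mul_mul {p : ℝ → ℝ} (hp : Tendsto p atTop (𝓝 1)) :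
    Tendsto (fun r => r * (1 / (2 * r * p r))) atTop (𝓝 (1 / 2)) := by
  have h : Tendsto (fun r => 1 / (2 * p r)) atTop (𝓝 (1 / (2 * 1))) :=
    tendsto_const_nhds.div (hp.const_mul 2) (by norm_num)
  rw [mul_one] at h
  refine h.congr' ?_
  filter_upwards [eventually_ne_atTop 0] with r hr
  by_cases hpr : p r = 0
  · simp [hpr]
  · field_simp

lemma tendsto_sum_Icc_one_div_pow (n : ℕ) :
    Tendsto (fun r : ℝ => ∑ i ∈ Icc 1 n, (1 / r) ^ i) atTop (𝓝 0) := by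
  have h := tendsto_finsetSum (Icc 1 n) fun i _ =>
    (tendsto_zero_of_tendsto_mul_self tendsto_mul_one_div_self).pow i
  rwa [sum_eq_zero fun i hi => zero_pow (by have := (mem_Icc.mp hi).1; omega)] at h

lemma sum_Icc_one_cast_id (n : ℕ) : ∑ i ∈ Icc 1 n, (i : ℝ) = n * (n + 1) / 2 := by
  induction n with
  | zero => simp
  | succ n ih =>
    rw [sum_Icc_succ_top (by omega), ih]
    push_cast
    ring

lemma sum_Icc_two_cast_id {n : ℕ} (hn : 1 ≤ n) :
    ∑ i ∈ Icc 2 n, (i : ℝ) = ∑ i ∈ Icc 1 n, (i : ℝ) - 1 := by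
  rw [← add_sum_Ioc_eq_sum_Icc hn, ← Icc_add_one_left_eq_Ioc]
  push_cast
  ring

theorem cycle_critical_absorption_rate_limit_general (N : ℕ) (hN : 4 ≤ N)
    (pc : ℝ → ℝ)
    (hpc1 : Tendsto pc atTop (nhds 1)) :
    Tendsto
      (fun r : ℝ =>
        (∑ i ∈ Icc 1 (N - 1), ∑ j ∈ Icc 1 i, (1 / r) ^ (i - j + 1) * (r * j + N - j)) /
          ((∑ i ∈ Icc 2 (N - 1), ∑ j ∈ Icc 2 i,
              (1 / (2 * r * pc r)) ^ (i - j + 1) * (r * j + N - j)) +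
            ((N : ℝ) / 2) * ∑ i ∈ Icc 1 (N - 1), (1 / r) ^ i))
      atTop
      (nhds (2 * (N : ℝ) * ((N : ℝ) - 1) / (((N : ℝ) + 1) * ((N : ℝ) - 2)))) := by
  have hNR : (4 : ℝ) ≤ N := by exact_mod_cast hN
  have hS : ∑ i ∈ Icc 1 (N - 1), (i : ℝ) = N * (N - 1) / 2 := by
    rw [sum_Icc_one_cast_id, Nat.cast_sub (by omega)]
    push_cast
    ring
  have hnum := tendsto_triangular_sum tendsto_mul_one_div_self 1 (N - 1) N
  have hden := (tendsto_triangular_sum (tendsto_mul_one_div_two_mul_mul hpc1) 2 (N - 1) N).add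
    ((tendsto_sum_Icc_one_div_pow (N - 1)).const_mul ((N : ℝ) / 2))
  rw [sum_Icc_two_cast_id (by omega), hS] at hden
  rw [hS, one_mul] at hnum
  have hden_pos : (0 : ℝ) < 1 / 2 * (N * (N - 1) / 2 - 1) + N / 2 * 0 := by nlinarith
  have hval : 2 * (N : ℝ) * (N - 1) / ((N + 1) * (N - 2)) =
      N * (N - 1) / 2 / (1 / 2 * (N * (N - 1) / 2 - 1) + N / 2 * 0) := by
    rw [div_eq_div_iff (by nlinarith) hden_pos.ne']
    ring
  rw [hval]
  exact hnum.div hden hden_pos.ne'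

/-- For the cycle graph of order `N`, the critical absorption time rate tends to
`2N(N-1)/((N+1)(N-2))` as `r → +∞`, where `p_c(r)` is the critical proliferation
parameter, characterized by the displayed equation and tending to `1`. -/
theorem cycle_critical_absorption_rate_limit (N : ℕ) (hN : 4 ≤ N)
    (pc : ℝ → ℝ)
    (hpc : ∀ r : ℝ, 1 < r →
      (2 / (1 + 2 * r * pc r)) * ∑ i ∈ range (N - 1), (1 / (2 * r * pc r)) ^ i =
        ∑ i ∈ Icc 1 (N - 1), (1 / r) ^ i)
    (hpc1 : Tendsto pc atTop (nhds 1)) :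
    Tendsto
      (fun r : ℝ =>
        (∑ i ∈ Icc 1 (N - 1), ∑ j ∈ Icc 1 i, (1 / r) ^ (i - j + 1) * (r * j + N - j)) /
          ((∑ i ∈ Icc 2 (N - 1), ∑ j ∈ Icc 2 i,
              (1 / (2 * r * pc r)) ^ (i - j + 1) * (r * j + N - j)) +
            ((N : ℝ) / 2) * ∑ i ∈ Icc 1 (N - 1), (1 / r) ^ i))
      atTop
      (nhds (2 * (N : ℝ) * ((N : ℝ) - 1) / (((N : ℝ) + 1) * ((N : ℝ) - 2)))) :=
  cycle_critical_absorption_rate_limit_general N hN pc hpc1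
end

section
/- For Bernoulli proliferation on the star graph of order N (one centre and N-1 leaves), the mean absorption time of a single mutant equals τ_1 = (1/N)·( w_1/(N-1+rp) + (N-1)^2·( rp·w_2 + (rp+N-2)·w_1 )/( (N-1)(rp)^2 + rp + N-2 ) ), where w_j = rj + N - j. In particular lim_{r→∞} τ_1 = (3N-2)/(Np). -/
open Filter Topology

/-! The two equations for the states `(1,0)` and `(1,1)` form a linear system in `τ₁₀, τ₁₁`;
eliminating `τ₁₁` leaves `τ₁₀` times `(N-1)(rp)² + rp + N - 2`, which gives the closed form.
Every term of the closed form is a ratio of polynomials in `r` of equal degree, so the limit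
`r → ∞` is the ratio of leading coefficients: `1/p` for the centre start and `3(N-1)/p` for a
leaf start. -/

theorem leaf_time_eq_of_jump_equations {n x w₁ w₂ s t : ℝ} (hn : 2 ≤ n) (hx : 0 < x)
    (hs : s = ((n - 1) * x / ((n - 1) * x + 1)) * t + (n - 1) * w₁ / ((n - 1) * x + 1))
    (ht : t = ((n - 2) / (n - 2 + x)) * s + w₂ / (n - 2 + x)) :
    s = (n - 1) * (x * w₂ + (x + n - 2) * w₁) / ((n - 1) * x ^ 2 + x + n - 2) := by
  have hA : 0 < (n - 1) * x + 1 := by nlinarith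
  have hB : 0 < n - 2 + x := by linarith
  have hs' : ((n - 1) * x + 1) * s = (n - 1) * x * t + (n - 1) * w₁ := by
    rw [hs]; field_simp
  have ht' : (n - 2 + x) * t = (n - 2) * s + w₂ := by
    rw [ht]; field_simp
  have hD : 0 < (n - 1) * x ^ 2 + x + n - 2 := by nlinarith
  rw [eq_div_iff hD.ne']
  linear_combination (n - 2 + x) * hs' + (n - 1) * x * ht'

theorem tendsto_quadratic_div_quadratic (a b c d e f : ℝ) (hd : d ≠ 0) :
    Tendsto (fun r => (a * r ^ 2 + b * r + c) / (d * r ^ 2 + e * r + f)) atTop (𝓝 (a / d)) := by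
  -- divide through by `r ²` and substitute `y = r⁻¹ → 0`
  have hg : ContinuousAt (fun y => (a + b * y + c * y ^ 2) / (d + e * y + f * y ^ 2)) 0 :=
    ContinuousAt.div (by fun_prop) (by fun_prop) (by simpa using hd)
  have hlim := hg.tendsto.comp tendsto_inv_atTop_zero
  simp only [Function.comp_def, inv_pow, mul_zero, add_zero, ne_eq, OfNat.ofNat_ne_zero,
    not_false_eq_true, zero_pow] at hlim
  refine hlim.congr' ?_
  filter_upwards [eventually_ne_atTop 0] with r hr
  field_simp

theorem tendsto_linear_div_linear (a b c d : ℝ) (hc : c ≠ 0) :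
    Tendsto (fun r => (a * r + b) / (c * r + d)) atTop (𝓝 (a / c)) := by
  refine (tendsto_quadratic_div_quadratic a b 0 c d 0 hc).congr' ?_
  filter_upwards [eventually_ne_atTop 0] with r hr
  rw [← mul_div_mul_left (a * r + b) (c * r + d) hr]
  ring_nf

/-- The closed form of `τ₁`, with `w j = r j + N - j`. -/
noncomputable def starAbsorptionTime (N p r : ℝ) : ℝ :=
  (1 / N) * ((r * 1 + N - 1) / (N - 1 + r * p) +
    (N - 1) ^ 2 * ((r * p) * (r * 2 + N - 2) + (r * p + N - 2) * (r * 1 + N - 1)) /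
      ((N - 1) * (r * p) ^ 2 + r * p + N - 2))

theorem tendsto_starAbsorptionTime {N p : ℝ} (hN : N ≠ 1) (hp : p ≠ 0) :
    Tendsto (starAbsorptionTime N p) atTop (𝓝 ((3 * N - 2) / (N * p))) := by
  have hcentre : Tendsto (fun r => (r * 1 + N - 1) / (N - 1 + r * p)) atTop (𝓝 (1 / p)) := by
    refine (tendsto_linear_div_linear 1 (N - 1) p (N - 1) hp).congr fun r => ?_
    ring_nf
  have hleaf : Tendsto (fun r => (N - 1) ^ 2 *
      ((r * p) * (r * 2 + N - 2) + (r * p + N - 2) * (r * 1 + N - 1)) /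
        ((N - 1) * (r * p) ^ 2 + r * p + N - 2)) atTop
      (𝓝 ((N - 1) ^ 2 * (3 * p / ((N - 1) * p ^ 2)))) := by
    refine ((tendsto_quadratic_div_quadratic (3 * p) (p * (2 * N - 3) + N - 2)
      ((N - 2) * (N - 1)) ((N - 1) * p ^ 2) p (N - 2) (by positivity)).const_mul
        ((N - 1) ^ 2)).congr fun r => ?_
    rw [mul_div_assoc]
    ring_nf
  have hlimit : 1 / N * (1 / p + (N - 1) ^ 2 * (3 * p / ((N - 1) * p ^ 2))) =
      (3 * N - 2) / (N * p) := by
    field_simp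
    ring
  exact hlimit ▸ (hcentre.add hleaf).const_mul (1 / N)

theorem star_bernoulli_absorption_time_general (N : ℕ) (hN : 3 ≤ N)
    (p : ℝ) (hp : 0 < p)
    (τ01 τ10 τ11 τ1 : ℝ → ℝ)
    (h01 : ∀ r : ℝ, 0 < r → τ01 r = (r * 1 + N - 1) / ((N : ℝ) - 1 + r * p))
    (h10 : ∀ r : ℝ, 0 < r → τ10 r =
      (((N : ℝ) - 1) * (r * p) / (((N : ℝ) - 1) * (r * p) + 1)) * τ11 r +
        ((N : ℝ) - 1) * (r * 1 + N - 1) / (((N : ℝ) - 1) * (r * p) + 1))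
    (h11 : ∀ r : ℝ, 0 < r → τ11 r =
      (((N : ℝ) - 2) / ((N : ℝ) - 2 + r * p)) * τ10 r +
        (r * 2 + N - 2) / ((N : ℝ) - 2 + r * p))
    (h1 : ∀ r : ℝ, 0 < r → τ1 r = (1 / (N : ℝ)) * (τ01 r + ((N : ℝ) - 1) * τ10 r)) :
    (∀ r : ℝ, 0 < r →
      τ1 r = (1 / (N : ℝ)) *
        ((r * 1 + N - 1) / ((N : ℝ) - 1 + r * p) +
          ((N : ℝ) - 1) ^ 2 *
            ((r * p) * (r * 2 + N - 2) + (r * p + N - 2) * (r * 1 + N - 1)) /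
              (((N : ℝ) - 1) * (r * p) ^ 2 + r * p + N - 2))) ∧
    Tendsto τ1 atTop (nhds ((3 * (N : ℝ) - 2) / ((N : ℝ) * p))) := by
  have hN3 : (3 : ℝ) ≤ N := by exact_mod_cast hN
  have closed : ∀ r : ℝ, 0 < r → τ1 r = starAbsorptionTime N p r := by
    intro r hr
    have hleaf := leaf_time_eq_of_jump_equations (by linarith) (mul_pos hr hp)
      (h10 r hr) (h11 r hr)
    rw [h1 r hr, h01 r hr, hleaf, starAbsorptionTime]
    ring
  refine ⟨closed, ?_⟩
  refine (tendsto_starAbsorptionTime (by linarith) hp.ne').congr' ?_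
  filter_upwards [eventually_gt_atTop 0] with r hr
  exact (closed r hr).symm

/-- For Bernoulli proliferation on the star graph of order `N`, solving the
embedded jump equations gives the closed form for the mean absorption time of a
single mutant, which tends to `(3N-2)/(Np)` as `r → +∞`. Here `w j = rj + N - j`. -/
theorem star_bernoulli_absorption_time (N : ℕ) (hN : 3 ≤ N)
    (p : ℝ) (hp : 0 < p) (hp1 : p ≤ 1)
    (τ01 τ10 τ11 τ1 : ℝ → ℝ)
    (h01 : ∀ r : ℝ, 0 < r → τ01 r = (r * 1 + N - 1) / ((N : ℝ) - 1 + r * p))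
    (h10 : ∀ r : ℝ, 0 < r → τ10 r =
      (((N : ℝ) - 1) * (r * p) / (((N : ℝ) - 1) * (r * p) + 1)) * τ11 r +
        ((N : ℝ) - 1) * (r * 1 + N - 1) / (((N : ℝ) - 1) * (r * p) + 1))
    (h11 : ∀ r : ℝ, 0 < r → τ11 r =
      (((N : ℝ) - 2) / ((N : ℝ) - 2 + r * p)) * τ10 r +
        (r * 2 + N - 2) / ((N : ℝ) - 2 + r * p))
    (h1 : ∀ r : ℝ, 0 < r → τ1 r = (1 / (N : ℝ)) * (τ01 r + ((N : ℝ) - 1) * τ10 r)) :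
    (∀ r : ℝ, 0 < r →
      τ1 r = (1 / (N : ℝ)) *
        ((r * 1 + N - 1) / ((N : ℝ) - 1 + r * p) +
          ((N : ℝ) - 1) ^ 2 *
            ((r * p) * (r * 2 + N - 2) + (r * p + N - 2) * (r * 1 + N - 1)) /
              (((N : ℝ) - 1) * (r * p) ^ 2 + r * p + N - 2))) ∧
    Tendsto τ1 atTop (nhds ((3 * (N : ℝ) - 2) / ((N : ℝ) * p))) :=
  star_bernoulli_absorption_time_general N hN p hp τ01 τ10 τ11 τ1 h01 h10 h11 h1
end
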